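/- Let β > 0 and g(t) = exp(−t^{−β}) for t > 0, g(t) = 0 for t ≤ 0. For fixed m ≥ 3, define u : ℝ × ℤ → ℝ by u(t,0) = g(t); for x ≥ 1, u(t,x) = g(t) + Σ_{k=1}^∞ [g^{(mk)}(t)/(2k)!]·(x+k)···(x+1)·x···(x−k+1); and u(t,x) = u(t,−x−1) for x ≤ −1. Then u is a nontrivial solution of the higher-order equation ∂_t^m u(t,x) = u(t,x+1) + u(t,x−1) − 2u(t,x) on ℝ × ℤ with ∂_t^k u(0,x) = 0 for all k ∈ ℕ₀ and x ∈ ℤ. -/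

import Mathlib

/-!
Every derivative of `g` is a finite combination of the functions `t ^ a * exp (-t ^ (-β))`
(extended by `0` to `t ≤ 0`), each of which tends to `0` at `0⁺`; hence `g` is smooth and all
its derivatives vanish on `t ≤ 0`.

The coefficients `a_k(x) = (x+k)⋯(x-k+1) / (2k)!` play the role of `x ^ (2k) / (2k)!`: they
satisfy `a_0 = 1`, `Δ a_(k+1) = a_k`, and `a_k(x) = 0` for `k > |x|`. So
`u(t,x) = Σ_k g^(mk)(t) a_k(x)` is a finite sum for each `x`, and
`∂_t^m u = Σ_k g^(m(k+1)) a_k = Δ u`. The product defining `a_k` is invariant under `x ↦ -x-1`,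
so the reflection `u(t,x) = u(t,-x-1)` built into `u` is automatic.
-/

noncomputable def gfun (β : ℝ) (t : ℝ) : ℝ :=
  if 0 < t then Real.exp (-(t ^ (-β))) else 0

noncomputable def consecProd (x : ℤ) (k : ℕ) : ℝ :=
  ∏ j ∈ Finset.range (2 * k), ((x + k - j : ℤ) : ℝ)

/-- The higher-order Tychonoff-type function: `u(t,0) = g(t)`,
`u(t,x) = g(t) + Σ_{k≥1} g^{(mk)}(t)/(2k)! · (x+k)···(x−k+1)` for `x ≥ 1`,
and `u(t,x) = u(t,−x−1)` for `x ≤ −1`. -/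
noncomputable def ulinem (β : ℝ) (m : ℕ) (t : ℝ) (x : ℤ) : ℝ :=
  gfun β t + ∑' k : ℕ,
    iteratedDeriv (m * (k + 1)) (gfun β) t / (Nat.factorial (2 * (k + 1))) *
      consecProd (if 0 ≤ x then x else -x - 1) (k + 1)

open Real Filter Topology Finset
open scoped ContDiff

noncomputable def flat (β a : ℝ) (t : ℝ) : ℝ :=
  if 0 < t then t ^ a * exp (-(t ^ (-β))) else 0

section Flat

variable {β : ℝ}

theorem flat_of_nonpos (a : ℝ) {t : ℝ} (ht : t ≤ 0) : flat β a t = 0 :=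
  if_neg ht.not_gt

theorem flat_of_pos (a : ℝ) {t : ℝ} (ht : 0 < t) : flat β a t = t ^ a * exp (-(t ^ (-β))) :=
  if_pos ht

theorem tendsto_flat_nhds_zero (hβ : 0 < β) (a : ℝ) : Tendsto (flat β a) (𝓝 0) (𝓝 0) := by
  have hleft : Tendsto (flat β a) (𝓝[≤] 0) (𝓝 0) := tendsto_const_nhds.congr' <|
    eventually_nhdsWithin_of_forall fun t ht => (flat_of_nonpos a ht).symm
  have hright : Tendsto (flat β a) (𝓝[>] 0) (𝓝 0) := by
    have hpow : Tendsto (fun t : ℝ => t ^ (-β)) (𝓝[>] 0) atTop := by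
      refine ((tendsto_rpow_atTop hβ).comp tendsto_inv_nhdsGT_zero).congr' ?_
      filter_upwards [self_mem_nhdsWithin] with t (ht : 0 < t)
      rw [Function.comp_apply, inv_rpow ht.le, ← rpow_neg ht.le]
    -- `t ^ a = (t ^ (-β)) ^ (-(a / β))`, and `s ^ c * exp (-s) → 0` as `s → ∞`
    refine ((tendsto_rpow_mul_exp_neg_mul_atTop_nhds_zero (-(a / β)) 1 one_pos).comp hpow).congr' ?_
    filter_upwards [self_mem_nhdsWithin] with t (ht : 0 < t)
    have hexp : -β * -(a / β) = a := by field_simp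
    rw [Function.comp_apply, ← rpow_mul ht.le, hexp, flat_of_pos a ht, neg_one_mul]
  simpa only [nhdsLE_sup_nhdsGT] using hleft.sup hright

theorem hasDerivAt_flat_of_pos (a : ℝ) {t : ℝ} (ht : 0 < t) :
    HasDerivAt (flat β a) (a * flat β (a - 1) t + β * flat β (a - β - 1) t) t := by
  have hprod := (hasDerivAt_rpow_const (p := a) (Or.inl ht.ne')).mul
    ((hasDerivAt_rpow_const (p := -β) (Or.inl ht.ne')).neg.exp)
  have heq : (fun s => s ^ a * exp (-(s ^ (-β)))) =ᶠ[𝓝 t] flat β a := by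
    filter_upwards [Ioi_mem_nhds ht] with s (hs : 0 < s)
    rw [flat_of_pos a hs]
  refine (hprod.congr_of_eventuallyEq heq.symm).congr_deriv ?_
  rw [flat_of_pos _ ht, flat_of_pos _ ht, rpow_sub_one ht.ne' a, rpow_sub_one ht.ne' (-β),
    sub_sub, rpow_sub ht a, rpow_add ht, rpow_one]
  simp only [Pi.neg_apply, rpow_neg ht.le]
  field_simp

theorem hasDerivAt_flat (hβ : 0 < β) (a t : ℝ) :
    HasDerivAt (flat β a) (a * flat β (a - 1) t + β * flat β (a - β - 1) t) t := by
  rcases lt_trichotomy t 0 with ht | rfl | ht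
  · have heq : flat β a =ᶠ[𝓝 t] fun _ => 0 := by
      filter_upwards [Iio_mem_nhds ht] with s (hs : s < 0)
      exact flat_of_nonpos a hs.le
    rw [flat_of_nonpos _ ht.le, flat_of_nonpos _ ht.le, mul_zero, mul_zero, add_zero]
    exact (hasDerivAt_const t 0).congr_of_eventuallyEq heq
  · rw [flat_of_nonpos _ le_rfl, flat_of_nonpos _ le_rfl, mul_zero, mul_zero, add_zero,
      hasDerivAt_iff_tendsto_slope]
    -- the difference quotient of `flat β a` at `0` is `flat β (a - 1)`
    refine ((tendsto_flat_nhds_zero hβ (a - 1)).mono_left nhdsWithin_le_nhds).congr' ?_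
    filter_upwards [self_mem_nhdsWithin] with s (hs : s ≠ 0)
    rw [slope_def_field, flat_of_nonpos a le_rfl, sub_zero, sub_zero]
    rcases hs.lt_or_gt with hs | hs
    · rw [flat_of_nonpos _ hs.le, flat_of_nonpos _ hs.le, zero_div]
    · rw [flat_of_pos _ hs, flat_of_pos _ hs, rpow_sub_one hs.ne']
      ring
  · exact hasDerivAt_flat_of_pos a ht

def flatSpan (β : ℝ) : Submodule ℝ (ℝ → ℝ) :=
  Submodule.span ℝ (Set.range (flat β))

theorem flat_mem_flatSpan (a : ℝ) : flat β a ∈ flatSpan β :=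
  Submodule.subset_span ⟨a, rfl⟩

theorem eq_zero_of_mem_flatSpan {f : ℝ → ℝ} (hf : f ∈ flatSpan β) {t : ℝ} (ht : t ≤ 0) :
    f t = 0 := by
  induction hf using Submodule.span_induction with
  | mem f hf =>
    obtain ⟨a, rfl⟩ := hf
    exact flat_of_nonpos a ht
  | zero => rfl
  | add f g _ _ hf hg => simp [hf, hg]
  | smul c f _ hf => simp [hf]

theorem exists_hasDerivAt_of_mem_flatSpan (hβ : 0 < β) {f : ℝ → ℝ} (hf : f ∈ flatSpan β) :
    ∃ f' ∈ flatSpan β, ∀ t, HasDerivAt f (f' t) t := by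
  induction hf using Submodule.span_induction with
  | mem f hf =>
    obtain ⟨a, rfl⟩ := hf
    refine ⟨a • flat β (a - 1) + β • flat β (a - β - 1), ?_, hasDerivAt_flat hβ a⟩
    exact add_mem (Submodule.smul_mem _ _ (flat_mem_flatSpan _))
      (Submodule.smul_mem _ _ (flat_mem_flatSpan _))
  | zero => exact ⟨0, zero_mem _, fun t => hasDerivAt_const t 0⟩
  | add f g _ _ hf hg =>
    obtain ⟨f', hf'mem, hf'⟩ := hf
    obtain ⟨g', hg'mem, hg'⟩ := hg
    exact ⟨f' + g', add_mem hf'mem hg'mem, fun t => (hf' t).add (hg' t)⟩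
  | smul c f _ hf =>
    obtain ⟨f', hf'mem, hf'⟩ := hf
    exact ⟨c • f', Submodule.smul_mem _ c hf'mem, fun t => (hf' t).const_smul c⟩

theorem iteratedDeriv_mem_flatSpan (hβ : 0 < β) {f : ℝ → ℝ} (hf : f ∈ flatSpan β) (n : ℕ) :
    iteratedDeriv n f ∈ flatSpan β := by
  induction n with
  | zero => rwa [iteratedDeriv_zero]
  | succ n ih =>
    obtain ⟨f', hf'mem, hf'⟩ := exists_hasDerivAt_of_mem_flatSpan hβ ih
    rwa [iteratedDeriv_succ, funext fun t => (hf' t).deriv]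

theorem contDiff_of_mem_flatSpan (hβ : 0 < β) {f : ℝ → ℝ} (hf : f ∈ flatSpan β) :
    ContDiff ℝ ∞ f :=
  contDiff_of_differentiable_iteratedDeriv fun n _ t =>
    let ⟨_, _, hf'⟩ := exists_hasDerivAt_of_mem_flatSpan hβ (iteratedDeriv_mem_flatSpan hβ hf n)
    (hf' t).differentiableAt

theorem gfun_mem_flatSpan : gfun β ∈ flatSpan β := by
  convert flat_mem_flatSpan (β := β) 0 using 1
  ext t
  by_cases ht : 0 < t
  · rw [gfun, if_pos ht, flat_of_pos 0 ht, rpow_zero, one_mul]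
  · rw [gfun, if_neg ht, flat_of_nonpos 0 (not_lt.1 ht)]

theorem contDiff_gfun (hβ : 0 < β) : ContDiff ℝ ∞ (gfun β) :=
  contDiff_of_mem_flatSpan hβ gfun_mem_flatSpan

theorem iteratedDeriv_gfun_of_nonpos (hβ : 0 < β) (n : ℕ) {t : ℝ} (ht : t ≤ 0) :
    iteratedDeriv n (gfun β) t = 0 :=
  eq_zero_of_mem_flatSpan (iteratedDeriv_mem_flatSpan hβ gfun_mem_flatSpan n) ht

end Flat

theorem consecProd_eq (x : ℤ) (k : ℕ) :
    consecProd x k = ∏ j ∈ range (2 * k), ((x : ℝ) + k - j) := by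
  simp only [consecProd, Int.cast_sub, Int.cast_add, Int.cast_natCast]

@[simp]
theorem consecProd_zero (x : ℤ) : consecProd x 0 = 1 := by
  simp [consecProd]

theorem consecProd_eq_zero {x : ℤ} {k : ℕ} (h₁ : -(k : ℤ) ≤ x) (h₂ : x < k) :
    consecProd x k = 0 :=
  prod_eq_zero (i := (x + k).toNat) (mem_range.2 (by omega)) (Int.cast_eq_zero.2 (by omega))

theorem consecProd_neg_sub_one (x : ℤ) (k : ℕ) : consecProd (-x - 1) k = consecProd x k := by
  rw [consecProd_eq, consecProd_eq, ← prod_range_reflect (fun j : ℕ => (x : ℝ) + k - j)]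
  -- reversing the order of the factors turns each one into its negative
  have hfactor : ∀ j ∈ range (2 * k), ((-x - 1 : ℤ) : ℝ) + k - j
      = -((x : ℝ) + k - ((2 * k - 1 - j : ℕ) : ℝ)) := by
    intro j hj
    rw [Nat.cast_sub (by simp at hj; omega), Nat.cast_sub (by simp at hj; omega)]
    push_cast
    ring
  rw [prod_congr rfl hfactor, prod_neg, card_range, pow_mul, neg_one_sq, one_pow, one_mul]

theorem consecProd_succ_laplacian (x : ℤ) (k : ℕ) :
    consecProd (x + 1) (k + 1) + consecProd (x - 1) (k + 1) - 2 * consecProd x (k + 1)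
      = (2 * k + 2) * (2 * k + 1) * consecProd x k := by
  have h2k : 2 * (k + 1) = 2 * k + 1 + 1 := by ring
  set P := ∏ j ∈ range (2 * k), ((x : ℝ) + k - j)
  have hP : consecProd x k = P := consecProd_eq x k
  have e₁ : consecProd (x + 1) (k + 1) = P * (x + k + 1) * (x + k + 2) := by
    rw [consecProd_eq, h2k, prod_range_succ', prod_range_succ', prod_congr rfl fun j _ =>
      show ((x + 1 : ℤ) : ℝ) + ((k + 1 : ℕ) : ℝ) - ((j + 1 + 1 : ℕ) : ℝ) = x + k - j by
        push_cast; ring]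
    push_cast
    ring
  have e₂ : consecProd (x - 1) (k + 1) = P * (x - k) * (x - k - 1) := by
    rw [consecProd_eq, h2k, prod_range_succ, prod_range_succ, prod_congr rfl fun j _ =>
      show ((x - 1 : ℤ) : ℝ) + ((k + 1 : ℕ) : ℝ) - ((j : ℕ) : ℝ) = x + k - j by push_cast; ring]
    push_cast
    ring
  have e₃ : consecProd x (k + 1) = P * (x + k + 1) * (x - k) := by
    rw [consecProd_eq, h2k, prod_range_succ, prod_range_succ', prod_congr rfl fun j _ =>
      show (x : ℝ) + ((k + 1 : ℕ) : ℝ) - ((j + 1 : ℕ) : ℝ) = x + k - j by push_cast; ring]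
    push_cast
    ring
  rw [e₁, e₂, e₃, hP]
  ring

noncomputable def consecCoeff (x : ℤ) (k : ℕ) : ℝ :=
  consecProd x k / (2 * k).factorial

@[simp]
theorem consecCoeff_zero (x : ℤ) : consecCoeff x 0 = 1 := by
  simp [consecCoeff]

theorem consecCoeff_eq_zero {x : ℤ} {k : ℕ} (h₁ : -(k : ℤ) ≤ x) (h₂ : x < k) :
    consecCoeff x k = 0 := by
  rw [consecCoeff, consecProd_eq_zero h₁ h₂, zero_div]

theorem consecCoeff_succ_laplacian (x : ℤ) (k : ℕ) :
    consecCoeff (x + 1) (k + 1) + consecCoeff (x - 1) (k + 1) - 2 * consecCoeff x (k + 1)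
      = consecCoeff x k := by
  have hfact : ((2 * (k + 1)).factorial : ℝ) = (2 * k + 2) * (2 * k + 1) * (2 * k).factorial := by
    rw [show 2 * (k + 1) = 2 * k + 1 + 1 by ring, Nat.factorial_succ, Nat.factorial_succ]
    push_cast
    ring
  simp only [consecCoeff, hfact]
  field_simp
  linear_combination consecProd_succ_laplacian x k

theorem iteratedDeriv_iteratedDeriv {𝕜 F : Type*} [NontriviallyNormedField 𝕜]
    [NormedAddCommGroup F] [NormedSpace 𝕜 F] (m n : ℕ) (f : 𝕜 → F) :
    iteratedDeriv m (iteratedDeriv n f) = iteratedDeriv (m + n) f := by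
  simp only [iteratedDeriv_eq_iterate, Function.iterate_add]
  rfl

noncomputable def tychonoffSum (f : ℝ → ℝ) (m N : ℕ) (x : ℤ) (t : ℝ) : ℝ :=
  ∑ k ∈ range N, iteratedDeriv (m * k) f t * consecCoeff x k

section TychonoffSum

variable {f : ℝ → ℝ} {m N : ℕ}

theorem iteratedDeriv_tychonoffSum (hf : ContDiff ℝ ∞ f) (n : ℕ) (x : ℤ) (t : ℝ) :
    iteratedDeriv n (tychonoffSum f m N x) t
      = ∑ k ∈ range N, iteratedDeriv (n + m * k) f t * consecCoeff x k := by
  have hterm : ∀ k ∈ range N,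
      ContDiffAt ℝ n (fun s => iteratedDeriv (m * k) f s * consecCoeff x k) t := fun k _ =>
    have hk : ContDiff ℝ ∞ (iteratedDeriv (m * k) f) := by
      rw [iteratedDeriv_eq_iterate]
      exact hf.iterate_deriv _
    ((contDiff_infty.1 hk n).mul contDiff_const).contDiffAt
  unfold tychonoffSum
  rw [iteratedDeriv_fun_sum hterm]
  simp only [iteratedDeriv_mul_const_field, iteratedDeriv_iteratedDeriv]

theorem tychonoffSum_succ {x : ℤ} (hN : x.natAbs < N) :
    tychonoffSum f m (N + 1) x = tychonoffSum f m N x := by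
  ext t
  unfold tychonoffSum
  rw [sum_range_succ, consecCoeff_eq_zero (by omega) (by omega), mul_zero, add_zero]

theorem tychonoffSum_laplacian (x : ℤ) (t : ℝ) :
    tychonoffSum f m (N + 1) (x + 1) t + tychonoffSum f m (N + 1) (x - 1) t
        - 2 * tychonoffSum f m (N + 1) x t
      = ∑ k ∈ range N, iteratedDeriv (m * (k + 1)) f t * consecCoeff x k := by
  have hterm : ∀ k, iteratedDeriv (m * k) f t * consecCoeff (x + 1) k
      + iteratedDeriv (m * k) f t * consecCoeff (x - 1) k
      - 2 * (iteratedDeriv (m * k) f t * consecCoeff x k)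
      = iteratedDeriv (m * k) f t
        * (consecCoeff (x + 1) k + consecCoeff (x - 1) k - 2 * consecCoeff x k) := fun k => by ring
  simp only [tychonoffSum, mul_sum, ← sum_add_distrib, ← sum_sub_distrib, hterm]
  rw [sum_range_succ']
  simp only [consecCoeff_succ_laplacian, consecCoeff_zero]
  ring

theorem iteratedDeriv_tychonoffSum_eq_laplacian (hf : ContDiff ℝ ∞ f) {x : ℤ} (hN : x.natAbs < N)
    (t : ℝ) :
    iteratedDeriv m (tychonoffSum f m (N + 1) x) t
      = tychonoffSum f m (N + 1) (x + 1) t + tychonoffSum f m (N + 1) (x - 1) t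
        - 2 * tychonoffSum f m (N + 1) x t := by
  rw [tychonoffSum_laplacian, tychonoffSum_succ hN, iteratedDeriv_tychonoffSum hf]
  exact sum_congr rfl fun k _ => by rw [mul_add_one, add_comm]

end TychonoffSum

theorem ulinem_eq_tychonoffSum {β : ℝ} {m N : ℕ} {x : ℤ} (hN : x.natAbs < N) (t : ℝ) :
    ulinem β m t x = tychonoffSum (gfun β) m N x t := by
  obtain ⟨N, rfl⟩ : ∃ n, N = n + 1 := ⟨N - 1, by omega⟩
  have hfold : ∀ k, consecProd (if 0 ≤ x then x else -x - 1) k = consecProd x k := fun k => by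
    split_ifs
    · rfl
    · exact consecProd_neg_sub_one x k
  rw [ulinem, tychonoffSum, sum_range_succ', tsum_eq_sum (s := range N)]
  · rw [mul_zero, iteratedDeriv_zero, consecCoeff_zero, mul_one, add_comm]
    refine congrArg (· + gfun β t) (sum_congr rfl fun k _ => ?_)
    rw [hfold, consecCoeff]
    ring
  · intro k hk
    rw [mem_range, not_lt] at hk
    rw [hfold, consecProd_eq_zero (by omega) (by omega), mul_zero]

theorem ulinem_solves_higher_order_general (β : ℝ) (hβ : 0 < β) (m : ℕ) :
    (∀ (t : ℝ) (x : ℤ),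
      iteratedDeriv m (fun s => ulinem β m s x) t
        = ulinem β m t (x + 1) + ulinem β m t (x - 1) - 2 * ulinem β m t x) ∧
    (∀ (k : ℕ) (x : ℤ), iteratedDeriv k (fun s => ulinem β m s x) 0 = 0) ∧
    ∃ (t : ℝ) (x : ℤ), ulinem β m t x ≠ 0 := by
  refine ⟨fun t x => ?_, fun k x => ?_, ⟨1, 0, ?_⟩⟩
  · have hu : ∀ y : ℤ, y.natAbs ≤ x.natAbs + 1 →
        ∀ s, ulinem β m s y = tychonoffSum (gfun β) m (x.natAbs + 2) y s :=
      fun y hy => ulinem_eq_tychonoffSum (by omega)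
    simp only [hu x (by omega), hu (x + 1) (by omega), hu (x - 1) (by omega)]
    exact iteratedDeriv_tychonoffSum_eq_laplacian (contDiff_gfun hβ) (Nat.lt_succ_self _) t
  · rw [funext (ulinem_eq_tychonoffSum (Nat.lt_succ_self x.natAbs)),
      iteratedDeriv_tychonoffSum (contDiff_gfun hβ)]
    exact sum_eq_zero fun j _ => by rw [iteratedDeriv_gfun_of_nonpos hβ _ le_rfl, zero_mul]
  · rw [ulinem_eq_tychonoffSum (N := 1) (by decide)]
    simp [tychonoffSum, gfun, exp_ne_zero]

/-- for `m ≥ 3`, the function `u` above is a nontrivial solution of the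
higher-order equation `∂_t^m u(t,x) = u(t,x+1) + u(t,x−1) − 2u(t,x)` on `ℝ × ℤ` with all
time derivatives vanishing at `t = 0`. -/
theorem ulinem_solves_higher_order (β : ℝ) (hβ : 0 < β) (m : ℕ) (hm : 3 ≤ m) :
    (∀ (t : ℝ) (x : ℤ),
      iteratedDeriv m (fun s => ulinem β m s x) t
        = ulinem β m t (x + 1) + ulinem β m t (x - 1) - 2 * ulinem β m t x) ∧
    (∀ (k : ℕ) (x : ℤ), iteratedDeriv k (fun s => ulinem β m s x) 0 = 0) ∧
    ∃ (t : ℝ) (x : ℤ), ulinem β m t x ≠ 0 :=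
  ulinem_solves_higher_order_general β hβ m
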